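/- (Converse, part 3) Consider random variables $\underline{V}_{\mathcal{K}_s}, \underline{V}_{\mathcal{K}_w}$ (independent message blocks), a seed $\underline{U}$ independent of the messages with $H(\underline{U}) = \ell d_n \leq \ell n \epsilon_d$, an encoding $\underline{X}$ that is a deterministic function of $(\underline{V}_{\mathcal{K}_s}, \underline{V}_{\mathcal{K}_w}, \underline{U})$, and an eavesdropper observation $\underline{Z}$ that is a deterministic function of $\underline{X}$ (noiseless channel). If the scheme is individually secure, $I(\underline{V}_{\mathcal{K}_s}; \underline{Z}) \leq \epsilon_s$, then $H(\underline{V}_{\mathcal{K}_w}) \geq I(\underline{X}; \underline{Z}) - \epsilon_s - \ell n \epsilon_d$. -/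

import Mathlib

open Finset Real

variable {Ω : Type*} [Fintype Ω]

/-- Distribution of a random variable `X` on a finite sample space with pmf `μ`. -/
noncomputable def distOf {α : Type*} [Fintype α] [DecidableEq α]
    (μ : Ω → ℝ) (X : Ω → α) : α → ℝ :=
  fun a => ∑ ω ∈ Finset.univ.filter (fun ω => X ω = a), μ ω

/-- Shannon entropy (in bits) of a random variable. -/
noncomputable def entRV {α : Type*} [Fintype α] [DecidableEq α]
    (μ : Ω → ℝ) (X : Ω → α) : ℝ :=
  ∑ a, -(distOf μ X a * Real.logb 2 (distOf μ X a))

/-- Mutual information (in bits) of two random variables. -/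
noncomputable def mutInf {α β : Type*} [Fintype α] [DecidableEq α]
    [Fintype β] [DecidableEq β] (μ : Ω → ℝ) (X : Ω → α) (Z : Ω → β) : ℝ :=
  entRV μ X + entRV μ Z - entRV μ (fun ω => (X ω, Z ω))

/-!
Since `I(X; Z) ≤ H(Z)`, it suffices to bound `H(Z)`. Security gives
`H(Z) ≤ ε_s + H(V_s, Z) - H(V_s)`, and `(V_s, Z)` is a function of `(V_s, V_w, U)`, so by
subadditivity `H(V_s, Z) ≤ H(V_s) + H(V_w) + H(U)`; finally `H(U) ≤ ℓ n ε_d`.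
-/

theorem Real.mul_logb_sub_mul_logb_le {p q : ℝ} (hp : 0 ≤ p) (hq : 0 ≤ q) (hpq : 0 < p → 0 < q) :
    p * logb 2 q - p * logb 2 p ≤ (q - p) / log 2 := by
  rcases hp.eq_or_lt with rfl | hp
  · simpa using div_nonneg hq (log_nonneg one_le_two)
  have hq := hpq hp
  have hlog2 : 0 < log 2 := log_pos one_lt_two
  have key : log (q / p) ≤ q / p - 1 := log_le_sub_one_of_pos (div_pos hq hp)
  rw [log_div hq.ne' hp.ne'] at key
  rw [logb, logb, ← mul_sub, ← sub_div, ← mul_div_assoc, div_le_div_iff_of_pos_right hlog2]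
  calc p * (log q - log p) ≤ p * (q / p - 1) := mul_le_mul_of_nonneg_left key hp.le
    _ = q - p := by field_simp

/-- Gibbs' inequality. -/
theorem Real.sum_mul_logb_le_sum_mul_logb {ι : Type*} (s : Finset ι) {p q : ι → ℝ}
    (hp : ∀ i ∈ s, 0 ≤ p i) (hq : ∀ i ∈ s, 0 ≤ q i) (hpq : ∀ i ∈ s, 0 < p i → 0 < q i)
    (hsum : ∑ i ∈ s, q i ≤ ∑ i ∈ s, p i) :
    ∑ i ∈ s, p i * logb 2 (q i) ≤ ∑ i ∈ s, p i * logb 2 (p i) := by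
  have hterm := Finset.sum_le_sum fun i hi =>
    mul_logb_sub_mul_logb_le (hp i hi) (hq i hi) (hpq i hi)
  rw [Finset.sum_sub_distrib, ← Finset.sum_div, Finset.sum_sub_distrib] at hterm
  have : (∑ i ∈ s, q i - ∑ i ∈ s, p i) / log 2 ≤ 0 :=
    div_nonpos_of_nonpos_of_nonneg (sub_nonpos.2 hsum) (log_nonneg one_le_two)
  linarith

section Entropy

variable {α β : Type*} [Fintype α] [DecidableEq α] [Fintype β] [DecidableEq β] (μ : Ω → ℝ)

theorem distOf_nonneg (hμ0 : ∀ ω, 0 ≤ μ ω) (X : Ω → α) (a : α) : 0 ≤ distOf μ X a :=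
  Finset.sum_nonneg fun ω _ => hμ0 ω

theorem sum_distOf (hμ1 : ∑ ω, μ ω = 1) (X : Ω → α) : ∑ a, distOf μ X a = 1 := by
  rw [← hμ1]
  exact Finset.sum_fiberwise Finset.univ X μ

theorem distOf_comp (φ : α → β) (X : Ω → α) (b : β) :
    distOf μ (fun ω => φ (X ω)) b = ∑ a with φ a = b, distOf μ X a := by
  unfold distOf
  rw [← Finset.sum_fiberwise_of_maps_to (t := {a | φ a = b}) (g := X)
    fun ω hω => by simpa using hω]
  refine Finset.sum_congr rfl fun a ha => Finset.sum_congr ?_ fun _ _ => rfl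
  ext ω
  simp only [Finset.mem_filter, Finset.mem_univ, true_and] at ha ⊢
  exact ⟨fun h => h.2, fun h => ⟨h ▸ ha, h⟩⟩

theorem distOf_le_distOf_comp (hμ0 : ∀ ω, 0 ≤ μ ω) (φ : α → β) (X : Ω → α) (a : α) :
    distOf μ X a ≤ distOf μ (fun ω => φ (X ω)) (φ a) :=
  Finset.sum_le_sum_of_subset_of_nonneg
    (fun ω hω => by simp only [Finset.mem_filter] at hω ⊢; exact ⟨hω.1, hω.2 ▸ rfl⟩)
    fun ω _ _ => hμ0 ω

theorem entRV_comp_eq_neg_sum (φ : α → β) (X : Ω → α) :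
    entRV μ (fun ω => φ (X ω))
      = -∑ a, distOf μ X a * logb 2 (distOf μ (fun ω => φ (X ω)) (φ a)) := by
  rw [entRV, Finset.sum_neg_distrib, ← Finset.sum_fiberwise Finset.univ φ]
  congr 1
  refine Finset.sum_congr rfl fun b _ => ?_
  have hfiber : ∑ a with φ a = b, distOf μ X a * logb 2 (distOf μ (fun ω => φ (X ω)) (φ a))
      = ∑ a with φ a = b, distOf μ X a * logb 2 (distOf μ (fun ω => φ (X ω)) b) :=
    Finset.sum_congr rfl fun a ha => by rw [(Finset.mem_filter.1 ha).2]
  rw [hfiber, ← Finset.sum_mul, ← distOf_comp]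

theorem entRV_le_of_comp (hμ0 : ∀ ω, 0 ≤ μ ω) {Y : Ω → β} (φ : α → β) (X : Ω → α)
    (hY : ∀ ω, Y ω = φ (X ω)) : entRV μ Y ≤ entRV μ X := by
  obtain rfl : Y = fun ω => φ (X ω) := funext hY
  rw [entRV_comp_eq_neg_sum, entRV, Finset.sum_neg_distrib, neg_le_neg_iff]
  refine Finset.sum_le_sum fun a _ => ?_
  rcases (distOf_nonneg μ hμ0 X a).eq_or_lt with h | h
  · simp [← h]
  · exact mul_le_mul_of_nonneg_left
      (logb_le_logb_of_le one_lt_two h (distOf_le_distOf_comp μ hμ0 φ X a)) h.le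

theorem entRV_pair_le_add (hμ0 : ∀ ω, 0 ≤ μ ω) (hμ1 : ∑ ω, μ ω = 1) (X : Ω → α) (Y : Ω → β) :
    entRV μ (fun ω => (X ω, Y ω)) ≤ entRV μ X + entRV μ Y := by
  set p := distOf μ (fun ω => (X ω, Y ω))
  have hX : entRV μ X = -∑ t, p t * logb 2 (distOf μ X t.1) :=
    entRV_comp_eq_neg_sum μ Prod.fst (fun ω => (X ω, Y ω))
  have hY : entRV μ Y = -∑ t, p t * logb 2 (distOf μ Y t.2) :=
    entRV_comp_eq_neg_sum μ Prod.snd (fun ω => (X ω, Y ω))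
  have hpX (t : α × β) : p t ≤ distOf μ X t.1 :=
    distOf_le_distOf_comp μ hμ0 Prod.fst (fun ω => (X ω, Y ω)) t
  have hpY (t : α × β) : p t ≤ distOf μ Y t.2 :=
    distOf_le_distOf_comp μ hμ0 Prod.snd (fun ω => (X ω, Y ω)) t
  have hsplit (t : α × β) : p t * logb 2 (distOf μ X t.1 * distOf μ Y t.2)
      = p t * logb 2 (distOf μ X t.1) + p t * logb 2 (distOf μ Y t.2) := by
    have hp0 : 0 ≤ p t := distOf_nonneg μ hμ0 _ t
    rcases hp0.eq_or_lt with h | h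
    · simp [← h]
    · rw [logb_mul (h.trans_le (hpX t)).ne' (h.trans_le (hpY t)).ne', mul_add]
  have hgibbs := sum_mul_logb_le_sum_mul_logb Finset.univ
    (p := p) (q := fun t => distOf μ X t.1 * distOf μ Y t.2)
    (fun t _ => distOf_nonneg μ hμ0 _ t)
    (fun t _ => mul_nonneg (distOf_nonneg μ hμ0 X _) (distOf_nonneg μ hμ0 Y _))
    (fun t _ h => mul_pos (h.trans_le (hpX t)) (h.trans_le (hpY t)))
    (by rw [Fintype.sum_prod_type, ← Finset.sum_mul_sum, sum_distOf μ hμ1, sum_distOf μ hμ1,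
      sum_distOf μ hμ1, one_mul])
  simp only [hsplit, Finset.sum_add_distrib] at hgibbs
  rw [hX, hY, entRV, Finset.sum_neg_distrib]
  linarith

theorem mutInf_le_entRV_right (hμ0 : ∀ ω, 0 ≤ μ ω) (X : Ω → α) (Z : Ω → β) :
    mutInf μ X Z ≤ entRV μ Z := by
  have := entRV_le_of_comp μ hμ0 Prod.fst (fun ω => (X ω, Z ω)) fun _ => rfl
  rw [mutInf]
  linarith

end Entropy

theorem converse_part_three_general
    {A B C XT ZT : Type*}
    [Fintype A] [DecidableEq A] [Fintype B] [DecidableEq B] [Fintype C] [DecidableEq C]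
    [Fintype XT] [DecidableEq XT] [Fintype ZT] [DecidableEq ZT]
    (μ : Ω → ℝ) (hμ0 : ∀ ω, 0 ≤ μ ω) (hμ1 : ∑ ω, μ ω = 1)
    (Vs : Ω → A) (Vw : Ω → B) (U : Ω → C)
    (f : A → B → C → XT) (g : XT → ZT)
    (X : Ω → XT) (hX : ∀ ω, X ω = f (Vs ω) (Vw ω) (U ω))
    (Z : Ω → ZT) (hZ : ∀ ω, Z ω = g (X ω))
    (l n d εd εs : ℝ)
    (hUent : entRV μ U = l * d) (hseed : l * d ≤ l * n * εd)
    (hsec : mutInf μ Vs Z ≤ εs) :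
    entRV μ Vw ≥ mutInf μ X Z - εs - l * n * εd := by
  have hXZ := mutInf_le_entRV_right μ hμ0 X Z
  have hVsZ : entRV μ (fun ω => (Vs ω, Z ω)) ≤ entRV μ (fun ω => (Vs ω, Vw ω, U ω)) :=
    entRV_le_of_comp μ hμ0 (fun t => (t.1, g (f t.1 t.2.1 t.2.2))) _ fun ω => by rw [hZ, hX]
  have hsplit := entRV_pair_le_add μ hμ0 hμ1 Vs fun ω => (Vw ω, U ω)
  have hsplit' := entRV_pair_le_add μ hμ0 hμ1 Vw U
  rw [mutInf] at hsec
  linarith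

/-- Converse, part 3: with mutually independent message blocks and seed, deterministic
encoding `X` and noiseless eavesdropper observation `Z = g(X)`, individual security
`I(V_Ks; Z) ≤ ε_s` forces `H(V_Kw) ≥ I(X; Z) - ε_s - ℓ n ε_d`. -/
theorem converse_part_three
    {A B C XT ZT : Type*}
    [Fintype A] [DecidableEq A] [Fintype B] [DecidableEq B] [Fintype C] [DecidableEq C]
    [Fintype XT] [DecidableEq XT] [Fintype ZT] [DecidableEq ZT]
    (μ : Ω → ℝ) (hμ0 : ∀ ω, 0 ≤ μ ω) (hμ1 : ∑ ω, μ ω = 1)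
    (Vs : Ω → A) (Vw : Ω → B) (U : Ω → C)
    (hindep : ∀ a b c, distOf μ (fun ω => (Vs ω, Vw ω, U ω)) (a, b, c)
        = distOf μ Vs a * distOf μ Vw b * distOf μ U c)
    (f : A → B → C → XT) (g : XT → ZT)
    (X : Ω → XT) (hX : ∀ ω, X ω = f (Vs ω) (Vw ω) (U ω))
    (Z : Ω → ZT) (hZ : ∀ ω, Z ω = g (X ω))
    (l n d εd εs : ℝ)
    (hUent : entRV μ U = l * d) (hseed : l * d ≤ l * n * εd)
    (hsec : mutInf μ Vs Z ≤ εs) :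
    entRV μ Vw ≥ mutInf μ X Z - εs - l * n * εd :=
  converse_part_three_general μ hμ0 hμ1 Vs Vw U f g X hX Z hZ l n d εd εs hUent hseed hsec
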